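/- Let a > 1 and b ∈ ℝ, and define f(x) = (1 − Φ(a·x + b)) / (1 − Φ(x)) for x ∈ ℝ. Then: (i) f(x) > 1 for x < −b/(a−1), f(−b/(a−1)) = 1, and f(x) < 1 for x > −b/(a−1); (ii) f(x) → 1 as x → −∞ and f(x) → 0 as x → +∞; (iii) f attains its maximum over ℝ, the maximum value is strictly greater than 1, and every maximizer lies in (−∞, −b/(a−1)). -/

import Mathlib

/-!
Since `Φ` is strictly increasing, `f(x) > 1` exactly when `a x + b < x`, i.e. to the left of the
fixed point `-b/(a-1)` of `x ↦ a x + b`. As `x → -∞` both tails tend to `1`. As `x → +∞`, the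
pointwise estimate `φ(t + d) ≤ e^{-xd} φ(t)` for `t ≥ x`, `d ≥ 0` gives the tail bound
`1 - Φ(x + d) ≤ e^{-xd} (1 - Φ(x))`, which with `d = (a-1)x + b` forces `f → 0`. A continuous
function that somewhere exceeds both of its limits at `±∞` attains its maximum, and as `f` exceeds
`1` somewhere, every maximizer lies where `f > 1`.
-/

open MeasureTheory Filter
open Topology

/-- The standard normal cumulative distribution function. -/
noncomputable def Phi (x : ℝ) : ℝ :=
  (ProbabilityTheory.gaussianReal 0 1 (Set.Iic x)).toReal

open Set Real

namespace ProbabilityTheory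

variable (μ : Measure ℝ) [IsProbabilityMeasure μ]

lemma cdf_sub_cdf {x y : ℝ} (h : x ≤ y) : cdf μ y - cdf μ x = μ.real (Ioc x y) := by
  have h_Ioc := (cdf μ).measure_Ioc x y
  rw [measure_cdf] at h_Ioc
  rw [measureReal_def, h_Ioc, ENNReal.toReal_ofReal (sub_nonneg.2 (monotone_cdf μ h))]

lemma one_sub_cdf (x : ℝ) : 1 - cdf μ x = μ.real (Ioi x) := by
  rw [cdf_eq_real, ← compl_Iic, measureReal_compl measurableSet_Iic, probReal_univ]

lemma continuous_cdf [NullSingletonClass μ] : Continuous (cdf μ) := by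
  refine continuous_iff_continuousAt.2 fun x => ?_
  rw [(monotone_cdf μ).continuousAt_iff_leftLim_eq_rightLim, StieltjesFunction.rightLim_eq]
  have h_atom := (cdf μ).measure_singleton x
  rw [measure_cdf, measure_singleton, eq_comm, ENNReal.ofReal_eq_zero, sub_nonpos] at h_atom
  exact le_antisymm ((monotone_cdf μ).leftLim_le le_rfl) h_atom

lemma strictMono_cdf (h : volume ≪ μ) : StrictMono (cdf μ) := by
  intro x y hxy
  have h_pos : 0 < μ.real (Ioc x y) := by
    refine ENNReal.toReal_pos (fun h_zero => ?_) (measure_ne_top μ _)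
    have h_vol := h h_zero
    simp only [Real.volume_Ioc, ENNReal.ofReal_eq_zero, tsub_le_iff_right, zero_add] at h_vol
    exact h_vol.not_gt hxy
  linarith [cdf_sub_cdf μ hxy.le]

end ProbabilityTheory

open ProbabilityTheory

lemma Phi_eq_cdf : Phi = cdf (gaussianReal 0 1) := by
  funext x
  rw [cdf_eq_real]
  rfl

lemma continuous_Phi : Continuous Phi := by
  have : NullSingletonClass (gaussianReal 0 1) := nullSingletonClass_gaussianReal one_ne_zero
  rw [Phi_eq_cdf]
  exact continuous_cdf _

lemma strictMono_Phi : StrictMono Phi := by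
  rw [Phi_eq_cdf]
  exact strictMono_cdf _ (gaussianReal_absolutelyContinuous' 0 one_ne_zero)

lemma one_sub_Phi_pos (x : ℝ) : 0 < 1 - Phi x := by
  have h_lt := strictMono_Phi (lt_add_one x)
  have h_le : Phi (x + 1) ≤ 1 := Phi_eq_cdf ▸ cdf_le_one _ _
  linarith

lemma one_sub_Phi_eq_integral (x : ℝ) : 1 - Phi x = ∫ t in Ioi x, gaussianPDFReal 0 1 t := by
  rw [Phi_eq_cdf, one_sub_cdf, measureReal_def, gaussianReal_apply_eq_integral 0 one_ne_zero,
    ENNReal.toReal_ofReal (setIntegral_nonneg measurableSet_Ioi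
      fun t _ => gaussianPDFReal_nonneg 0 1 t)]

lemma one_sub_Phi_add_eq_integral (x d : ℝ) :
    1 - Phi (x + d) = ∫ t in Ioi x, gaussianPDFReal 0 1 (t + d) := by
  have h_preimage : (· + d) ⁻¹' Ioi (x + d) = Ioi x := by
    ext t
    simp
  rw [one_sub_Phi_eq_integral, ← h_preimage,
    ← (measurePreserving_add_right volume d).setIntegral_preimage_emb
      (MeasurableEquiv.addRight d).measurableEmbedding]

lemma gaussianPDFReal_add_le {x t d : ℝ} (hxt : x ≤ t) (hd : 0 ≤ d) :
    gaussianPDFReal 0 1 (t + d) ≤ exp (-(x * d)) * gaussianPDFReal 0 1 t := by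
  simp only [gaussianPDFReal, NNReal.coe_one, mul_one, sub_zero]
  rw [mul_left_comm, ← exp_add]
  gcongr
  nlinarith [mul_nonneg (sub_nonneg.2 hxt) hd, sq_nonneg d]

lemma one_sub_Phi_add_le (x : ℝ) {d : ℝ} (hd : 0 ≤ d) :
    1 - Phi (x + d) ≤ exp (-(x * d)) * (1 - Phi x) := by
  have h_int := integrable_gaussianPDFReal 0 1
  rw [one_sub_Phi_add_eq_integral, one_sub_Phi_eq_integral, ← integral_const_mul]
  exact setIntegral_mono_on (h_int.comp_add_right d).integrableOn
    (h_int.const_mul _).integrableOn measurableSet_Ioi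
    fun t ht => gaussianPDFReal_add_le (le_of_lt ht) hd

noncomputable def tailRatio (a b x : ℝ) : ℝ := (1 - Phi (a * x + b)) / (1 - Phi x)

section TailRatio

variable {a b x : ℝ}

lemma one_lt_tailRatio_iff : 1 < tailRatio a b x ↔ a * x + b < x := by
  rw [tailRatio, one_lt_div (one_sub_Phi_pos x), sub_lt_sub_iff_left, strictMono_Phi.lt_iff_lt]

lemma tailRatio_lt_one_iff : tailRatio a b x < 1 ↔ x < a * x + b := by
  rw [tailRatio, div_lt_one (one_sub_Phi_pos x), sub_lt_sub_iff_left, strictMono_Phi.lt_iff_lt]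

lemma tailRatio_eq_one (h : a * x + b = x) : tailRatio a b x = 1 := by
  rw [tailRatio, h, div_self (one_sub_Phi_pos x).ne']

end TailRatio

lemma continuous_tailRatio (a b : ℝ) : Continuous (tailRatio a b) :=
  ((continuous_const.sub (continuous_Phi.comp (by fun_prop))).div
    (continuous_const.sub continuous_Phi)) fun x => (one_sub_Phi_pos x).ne'

lemma tendsto_tailRatio_atBot {a : ℝ} (ha : 0 < a) (b : ℝ) :
    Tendsto (tailRatio a b) atBot (𝓝 1) := by
  have h_affine : Tendsto (fun x => a * x + b) atBot atBot :=
    tendsto_atBot_add_const_right _ b (tendsto_id.const_mul_atBot ha)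
  have h_Phi : Tendsto Phi atBot (𝓝 0) := Phi_eq_cdf ▸ tendsto_cdf_atBot _
  have h_tail : Tendsto (fun x => 1 - Phi x) atBot (𝓝 1) := by
    simpa only [sub_zero] using h_Phi.const_sub 1
  rw [← div_one (1 : ℝ)]
  exact (h_tail.comp h_affine).div h_tail one_ne_zero

lemma tendsto_tailRatio_atTop {a : ℝ} (ha : 1 < a) (b : ℝ) :
    Tendsto (tailRatio a b) atTop (𝓝 0) := by
  have h_gap : Tendsto (fun x => (a - 1) * x + b) atTop atTop :=
    tendsto_atTop_add_const_right _ b (tendsto_id.const_mul_atTop (sub_pos.2 ha))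
  have h_bound : Tendsto (fun x => exp (-(x * ((a - 1) * x + b)))) atTop (𝓝 0) :=
    tendsto_exp_atBot.comp (tendsto_neg_atTop_atBot.comp (tendsto_id.atTop_mul_atTop₀ h_gap))
  refine squeeze_zero'
    (Eventually.of_forall fun x => (div_pos (one_sub_Phi_pos _) (one_sub_Phi_pos _)).le) ?_ h_bound
  filter_upwards [h_gap.eventually_ge_atTop 0] with x hx
  rw [tailRatio, div_le_iff₀ (one_sub_Phi_pos x), show a * x + b = x + ((a - 1) * x + b) by ring]
  exact one_sub_Phi_add_le x hx

section Affine

variable {a b x : ℝ}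

lemma affine_lt_self_iff (ha : 1 < a) : a * x + b < x ↔ x < -b / (a - 1) := by
  rw [lt_div_iff₀ (sub_pos.2 ha)]
  constructor <;> intro h <;> linarith

lemma self_lt_affine_iff (ha : 1 < a) : x < a * x + b ↔ -b / (a - 1) < x := by
  rw [div_lt_iff₀ (sub_pos.2 ha)]
  constructor <;> intro h <;> linarith

lemma neg_div_sub_one_isFixedPt (ha : 1 < a) :
    Function.IsFixedPt (fun x => a * x + b) (-b / (a - 1)) := by
  show a * (-b / (a - 1)) + b = -b / (a - 1)
  field_simp [(sub_pos.2 ha).ne']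
  ring

end Affine

lemma Continuous.exists_forall_ge_of_tendsto {β : Type*} [LinearOrder β] [TopologicalSpace β]
    [OrderTopology β] {f : ℝ → β} (hf : Continuous f) {l₁ l₂ : β}
    (h_bot : Tendsto f atBot (𝓝 l₁)) (h_top : Tendsto f atTop (𝓝 l₂)) {x₀ : ℝ}
    (h₁ : l₁ < f x₀) (h₂ : l₂ < f x₀) : ∃ x, ∀ y, f y ≤ f x :=
  hf.exists_forall_ge' x₀ <| by
    rw [cocompact_eq_atBot_atTop]
    exact eventually_sup.2 ⟨h_bot.eventually_le_const h₁, h_top.eventually_le_const h₂⟩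

/-- Properties of `f(x) = (1 − Φ(a·x + b))/(1 − Φ(x))` for `a > 1`:
(i) `f > 1` left of `−b/(a−1)`, `f = 1` there, `f < 1` right of it;
(ii) `f → 1` as `x → −∞` and `f → 0` as `x → +∞`;
(iii) `f` attains a maximum `> 1`, and every maximizer lies in `(−∞, −b/(a−1))`. -/
theorem tail_ratio_properties (a b : ℝ) (ha : 1 < a) :
    (∀ x : ℝ, x < -b / (a - 1) → 1 < (1 - Phi (a * x + b)) / (1 - Phi x)) ∧
    (1 - Phi (a * (-b / (a - 1)) + b)) / (1 - Phi (-b / (a - 1))) = 1 ∧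
    (∀ x : ℝ, -b / (a - 1) < x → (1 - Phi (a * x + b)) / (1 - Phi x) < 1) ∧
    Tendsto (fun x : ℝ => (1 - Phi (a * x + b)) / (1 - Phi x)) atBot (nhds 1) ∧
    Tendsto (fun x : ℝ => (1 - Phi (a * x + b)) / (1 - Phi x)) atTop (nhds 0) ∧
    (∃ x₀ : ℝ,
      (∀ x : ℝ, (1 - Phi (a * x + b)) / (1 - Phi x)
          ≤ (1 - Phi (a * x₀ + b)) / (1 - Phi x₀)) ∧
      1 < (1 - Phi (a * x₀ + b)) / (1 - Phi x₀) ∧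
      (∀ y : ℝ, (∀ x : ℝ, (1 - Phi (a * x + b)) / (1 - Phi x)
          ≤ (1 - Phi (a * y + b)) / (1 - Phi y)) → y < -b / (a - 1))) := by
  have h_left : ∀ x, x < -b / (a - 1) → 1 < tailRatio a b x := fun x hx =>
    one_lt_tailRatio_iff.2 ((affine_lt_self_iff ha).2 hx)
  have h_bot := tendsto_tailRatio_atBot (by linarith) b
  have h_top := tendsto_tailRatio_atTop ha b
  obtain ⟨x₁, hx₁⟩ : ∃ x₁, 1 < tailRatio a b x₁ := ⟨_, h_left _ (sub_one_lt _)⟩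
  obtain ⟨x₀, hx₀⟩ :=
    (continuous_tailRatio a b).exists_forall_ge_of_tendsto h_bot h_top hx₁ (by linarith)
  refine ⟨h_left, tailRatio_eq_one (neg_div_sub_one_isFixedPt ha),
    fun x hx => tailRatio_lt_one_iff.2 ((self_lt_affine_iff ha).2 hx), h_bot, h_top,
    x₀, hx₀, hx₁.trans_le (hx₀ x₁), fun y hy => ?_⟩
  exact (affine_lt_self_iff ha).1 (one_lt_tailRatio_iff.1 (hx₁.trans_le (hy x₁)))
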